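/- Let (ψ_1, ψ_2, A_0, A_1, A_2) be a smooth solution of the gauged Schrödinger map system on an interval I × ℝ^2, and define Θ := D_1 ψ_2 − D_2 ψ_1. Assume the curvature relations F_{12} = μ Im(conj(ψ_2)ψ_1), μ F_{01} = Re(conj(ψ_1) D_j ψ_j) + Re(conj(ψ_2)Θ), μ F_{02} = Re(conj(ψ_2) D_j ψ_j) − Re(conj(ψ_1)Θ), and the evolution equations D_t ψ_1 = i D_1 D_j ψ_j − i D_2 Θ, D_t ψ_2 = i D_2 D_j ψ_j + i D_1 Θ. Then Θ satisfies the covariant equation D_t Θ = i D_j D_j Θ + μ i ( ψ_2 Re(conj(ψ_2) Θ) + ψ_1 Re(conj(ψ_1) Θ) ). -/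

import Mathlib

noncomputable section
open Complex MeasureTheory Filter

/-- Partial derivative in the time direction on `ℝ × ℝ × ℝ` (coords `(t, x¹, x²)`). -/
def P0 {E : Type*} [NormedAddCommGroup E] [NormedSpace ℝ E]
    (f : ℝ × ℝ × ℝ → E) (p : ℝ × ℝ × ℝ) : E := deriv (fun s => f (s, p.2)) p.1

/-- Partial derivative in the `x¹` direction. -/
def P1 {E : Type*} [NormedAddCommGroup E] [NormedSpace ℝ E]
    (f : ℝ × ℝ × ℝ → E) (p : ℝ × ℝ × ℝ) : E := deriv (fun s => f (p.1, s, p.2.2)) p.2.1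

/-- Partial derivative in the `x²` direction. -/
def P2 {E : Type*} [NormedAddCommGroup E] [NormedSpace ℝ E]
    (f : ℝ × ℝ × ℝ → E) (p : ℝ × ℝ × ℝ) : E := deriv (fun s => f (p.1, p.2.1, s)) p.2.2

/-- Covariant derivative `D₀ = ∂ₜ + i A₀`. -/
def CD0 (A0 : ℝ × ℝ × ℝ → ℝ) (f : ℝ × ℝ × ℝ → ℂ) (p : ℝ × ℝ × ℝ) : ℂ :=
  P0 f p + Complex.I * (A0 p : ℂ) * f p

/-- Covariant derivative `D₁ = ∂₁ + i A₁`. -/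
def CD1 (A1 : ℝ × ℝ × ℝ → ℝ) (f : ℝ × ℝ × ℝ → ℂ) (p : ℝ × ℝ × ℝ) : ℂ :=
  P1 f p + Complex.I * (A1 p : ℂ) * f p

/-- Covariant derivative `D₂ = ∂₂ + i A₂`. -/
def CD2 (A2 : ℝ × ℝ × ℝ → ℝ) (f : ℝ × ℝ × ℝ → ℂ) (p : ℝ × ℝ × ℝ) : ℂ :=
  P2 f p + Complex.I * (A2 p : ℂ) * f p

/-- Curvature `F₀₁ = ∂₀A₁ − ∂₁A₀`. -/
def F01 (A0 A1 : ℝ × ℝ × ℝ → ℝ) (p : ℝ × ℝ × ℝ) : ℝ := P0 A1 p - P1 A0 p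

/-- Curvature `F₀₂ = ∂₀A₂ − ∂₂A₀`. -/
def F02 (A0 A2 : ℝ × ℝ × ℝ → ℝ) (p : ℝ × ℝ × ℝ) : ℝ := P0 A2 p - P2 A0 p

/-- Curvature `F₁₂ = ∂₁A₂ − ∂₂A₁`. -/
def F12 (A1 A2 : ℝ × ℝ × ℝ → ℝ) (p : ℝ × ℝ × ℝ) : ℝ := P1 A2 p - P2 A1 p

namespace Stmt13Aux

variable {E : Type*} [NormedAddCommGroup E] [NormedSpace ℝ E]

lemma P0_eq {f : ℝ × ℝ × ℝ → E} {p : ℝ × ℝ × ℝ} (hf : DifferentiableAt ℝ f p) :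
    P0 f p = fderiv ℝ f p (1, 0, 0) :=
  (hf.hasFDerivAt.comp_hasDerivAt p.1
    ((hasDerivAt_id p.1).prodMk (hasDerivAt_const p.1 p.2))).deriv

lemma P1_eq {f : ℝ × ℝ × ℝ → E} {p : ℝ × ℝ × ℝ} (hf : DifferentiableAt ℝ f p) :
    P1 f p = fderiv ℝ f p (0, 1, 0) :=
  (hf.hasFDerivAt.comp_hasDerivAt p.2.1
    ((hasDerivAt_const p.2.1 p.1).prodMk
      ((hasDerivAt_id p.2.1).prodMk (hasDerivAt_const p.2.1 p.2.2)))).deriv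

lemma P2_eq {f : ℝ × ℝ × ℝ → E} {p : ℝ × ℝ × ℝ} (hf : DifferentiableAt ℝ f p) :
    P2 f p = fderiv ℝ f p (0, 0, 1) :=
  (hf.hasFDerivAt.comp_hasDerivAt p.2.2
    ((hasDerivAt_const p.2.2 p.1).prodMk
      ((hasDerivAt_const p.2.2 p.2.1).prodMk (hasDerivAt_id p.2.2)))).deriv

lemma hd0 {f : ℝ × ℝ × ℝ → E} {p : ℝ × ℝ × ℝ} (hf : DifferentiableAt ℝ f p) :
    HasDerivAt (fun s => f (s, p.2)) (P0 f p) p.1 := by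
  rw [P0_eq hf]
  exact hf.hasFDerivAt.comp_hasDerivAt p.1 ((hasDerivAt_id p.1).prodMk (hasDerivAt_const p.1 p.2))

lemma hd1 {f : ℝ × ℝ × ℝ → E} {p : ℝ × ℝ × ℝ} (hf : DifferentiableAt ℝ f p) :
    HasDerivAt (fun s => f (p.1, s, p.2.2)) (P1 f p) p.2.1 := by
  rw [P1_eq hf]
  exact hf.hasFDerivAt.comp_hasDerivAt p.2.1
    ((hasDerivAt_const p.2.1 p.1).prodMk
      ((hasDerivAt_id p.2.1).prodMk (hasDerivAt_const p.2.1 p.2.2)))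

lemma hd2 {f : ℝ × ℝ × ℝ → E} {p : ℝ × ℝ × ℝ} (hf : DifferentiableAt ℝ f p) :
    HasDerivAt (fun s => f (p.1, p.2.1, s)) (P2 f p) p.2.2 := by
  rw [P2_eq hf]
  exact hf.hasFDerivAt.comp_hasDerivAt p.2.2
    ((hasDerivAt_const p.2.2 p.1).prodMk
      ((hasDerivAt_const p.2.2 p.2.1).prodMk (hasDerivAt_id p.2.2)))

lemma contDiff_fapp {f : ℝ × ℝ × ℝ → E} (hf : ContDiff ℝ (⊤ : ℕ∞) f) (v : ℝ × ℝ × ℝ) :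
    ContDiff ℝ (⊤ : ℕ∞) (fun q => fderiv ℝ f q v) :=
  (hf.fderiv_right (le_of_eq (by simp))).clm_apply contDiff_const

lemma contDiff_P0 {f : ℝ × ℝ × ℝ → E} (hf : ContDiff ℝ (⊤ : ℕ∞) f) : ContDiff ℝ (⊤ : ℕ∞) (P0 f) := by
  have : P0 f = fun q => fderiv ℝ f q (1, 0, 0) :=
    funext fun q => P0_eq (hf.differentiable (by simp) q)
  rw [this]; exact contDiff_fapp hf _

lemma contDiff_P1 {f : ℝ × ℝ × ℝ → E} (hf : ContDiff ℝ (⊤ : ℕ∞) f) : ContDiff ℝ (⊤ : ℕ∞) (P1 f) := by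
  have : P1 f = fun q => fderiv ℝ f q (0, 1, 0) :=
    funext fun q => P1_eq (hf.differentiable (by simp) q)
  rw [this]; exact contDiff_fapp hf _

lemma contDiff_P2 {f : ℝ × ℝ × ℝ → E} (hf : ContDiff ℝ (⊤ : ℕ∞) f) : ContDiff ℝ (⊤ : ℕ∞) (P2 f) := by
  have : P2 f = fun q => fderiv ℝ f q (0, 0, 1) :=
    funext fun q => P2_eq (hf.differentiable (by simp) q)
  rw [this]; exact contDiff_fapp hf _

lemma fapp_comm {f : ℝ × ℝ × ℝ → E} (hf : ContDiff ℝ (⊤ : ℕ∞) f) (v w : ℝ × ℝ × ℝ) (p : ℝ × ℝ × ℝ) :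
    fderiv ℝ (fun q => fderiv ℝ f q v) p w = fderiv ℝ (fun q => fderiv ℝ f q w) p v := by
  have hg : ContDiff ℝ (⊤ : ℕ∞) (fderiv ℝ f) := hf.fderiv_right (le_of_eq (by simp))
  have key : ∀ u : ℝ × ℝ × ℝ, fderiv ℝ (fun q => fderiv ℝ f q u) p
      = (ContinuousLinearMap.apply ℝ E u).comp (fderiv ℝ (fderiv ℝ f) p) := fun u =>
    ((ContinuousLinearMap.apply ℝ E u).hasFDerivAt.comp p
      ((hg.differentiable (by simp) p).hasFDerivAt)).fderiv
  rw [key v, key w]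
  exact (hf.contDiffAt.isSymmSndFDerivAt (by norm_num; exact WithTop.coe_le_coe.mpr le_top)) w v

lemma P01_comm {f : ℝ × ℝ × ℝ → E} (hf : ContDiff ℝ (⊤ : ℕ∞) f) (p : ℝ × ℝ × ℝ) :
    P0 (P1 f) p = P1 (P0 f) p := by
  have h0 : P0 f = fun q => fderiv ℝ f q (1, 0, 0) :=
    funext fun q => P0_eq (hf.differentiable (by simp) q)
  have h1 : P1 f = fun q => fderiv ℝ f q (0, 1, 0) :=
    funext fun q => P1_eq (hf.differentiable (by simp) q)
  rw [h0, h1, P0_eq ((contDiff_fapp hf _).differentiable (by simp) p),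
    P1_eq ((contDiff_fapp hf _).differentiable (by simp) p)]
  exact fapp_comm hf _ _ p

lemma P02_comm {f : ℝ × ℝ × ℝ → E} (hf : ContDiff ℝ (⊤ : ℕ∞) f) (p : ℝ × ℝ × ℝ) :
    P0 (P2 f) p = P2 (P0 f) p := by
  have h0 : P0 f = fun q => fderiv ℝ f q (1, 0, 0) :=
    funext fun q => P0_eq (hf.differentiable (by simp) q)
  have h2 : P2 f = fun q => fderiv ℝ f q (0, 0, 1) :=
    funext fun q => P2_eq (hf.differentiable (by simp) q)
  rw [h0, h2, P0_eq ((contDiff_fapp hf _).differentiable (by simp) p),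
    P2_eq ((contDiff_fapp hf _).differentiable (by simp) p)]
  exact fapp_comm hf _ _ p

lemma P12_comm {f : ℝ × ℝ × ℝ → E} (hf : ContDiff ℝ (⊤ : ℕ∞) f) (p : ℝ × ℝ × ℝ) :
    P1 (P2 f) p = P2 (P1 f) p := by
  have h1 : P1 f = fun q => fderiv ℝ f q (0, 1, 0) :=
    funext fun q => P1_eq (hf.differentiable (by simp) q)
  have h2 : P2 f = fun q => fderiv ℝ f q (0, 0, 1) :=
    funext fun q => P2_eq (hf.differentiable (by simp) q)
  rw [h1, h2, P1_eq ((contDiff_fapp hf _).differentiable (by simp) p),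
    P2_eq ((contDiff_fapp hf _).differentiable (by simp) p)]
  exact fapp_comm hf _ _ p

variable {A : ℝ × ℝ × ℝ → ℝ} {f g : ℝ × ℝ × ℝ → ℂ}

lemma contDiff_CD1 (hA : ContDiff ℝ (⊤ : ℕ∞) A) (hf : ContDiff ℝ (⊤ : ℕ∞) f) : ContDiff ℝ (⊤ : ℕ∞) (CD1 A f) := by
  have : ContDiff ℝ (⊤ : ℕ∞) (fun p => P1 f p + Complex.I * (A p : ℂ) * f p) :=
    (contDiff_P1 hf).add ((contDiff_const.mul (Complex.ofRealCLM.contDiff.comp hA)).mul hf)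
  exact this

lemma contDiff_CD2 (hA : ContDiff ℝ (⊤ : ℕ∞) A) (hf : ContDiff ℝ (⊤ : ℕ∞) f) : ContDiff ℝ (⊤ : ℕ∞) (CD2 A f) := by
  have : ContDiff ℝ (⊤ : ℕ∞) (fun p => P2 f p + Complex.I * (A p : ℂ) * f p) :=
    (contDiff_P2 hf).add ((contDiff_const.mul (Complex.ofRealCLM.contDiff.comp hA)).mul hf)
  exact this

lemma P0_CD1 (hA : ContDiff ℝ (⊤ : ℕ∞) A) (hf : ContDiff ℝ (⊤ : ℕ∞) f) (p : ℝ × ℝ × ℝ) :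
    P0 (CD1 A f) p
      = P0 (P1 f) p + (Complex.I * (Complex.ofReal (P0 A p)) * f p
        + Complex.I * (A p : ℂ) * P0 f p) := by
  have h1 := hd0 ((contDiff_P1 hf).differentiable (by simp) p)
  have h2 := (hd0 (hA.differentiable (by simp) p)).ofReal_comp
  have h3 := hd0 (hf.differentiable (by simp) p)
  exact (h1.add ((h2.const_mul Complex.I).mul h3)).deriv

lemma P0_CD2 (hA : ContDiff ℝ (⊤ : ℕ∞) A) (hf : ContDiff ℝ (⊤ : ℕ∞) f) (p : ℝ × ℝ × ℝ) :
    P0 (CD2 A f) p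
      = P0 (P2 f) p + (Complex.I * (Complex.ofReal (P0 A p)) * f p
        + Complex.I * (A p : ℂ) * P0 f p) := by
  have h1 := hd0 ((contDiff_P2 hf).differentiable (by simp) p)
  have h2 := (hd0 (hA.differentiable (by simp) p)).ofReal_comp
  have h3 := hd0 (hf.differentiable (by simp) p)
  exact (h1.add ((h2.const_mul Complex.I).mul h3)).deriv

lemma P1_CD0 (hA : ContDiff ℝ (⊤ : ℕ∞) A) (hf : ContDiff ℝ (⊤ : ℕ∞) f) (p : ℝ × ℝ × ℝ) :
    P1 (CD0 A f) p
      = P1 (P0 f) p + (Complex.I * (Complex.ofReal (P1 A p)) * f p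
        + Complex.I * (A p : ℂ) * P1 f p) := by
  have h1 := hd1 ((contDiff_P0 hf).differentiable (by simp) p)
  have h2 := (hd1 (hA.differentiable (by simp) p)).ofReal_comp
  have h3 := hd1 (hf.differentiable (by simp) p)
  exact (h1.add ((h2.const_mul Complex.I).mul h3)).deriv

lemma P2_CD0 (hA : ContDiff ℝ (⊤ : ℕ∞) A) (hf : ContDiff ℝ (⊤ : ℕ∞) f) (p : ℝ × ℝ × ℝ) :
    P2 (CD0 A f) p
      = P2 (P0 f) p + (Complex.I * (Complex.ofReal (P2 A p)) * f p
        + Complex.I * (A p : ℂ) * P2 f p) := by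
  have h1 := hd2 ((contDiff_P0 hf).differentiable (by simp) p)
  have h2 := (hd2 (hA.differentiable (by simp) p)).ofReal_comp
  have h3 := hd2 (hf.differentiable (by simp) p)
  exact (h1.add ((h2.const_mul Complex.I).mul h3)).deriv

lemma P1_CD2 (hA : ContDiff ℝ (⊤ : ℕ∞) A) (hf : ContDiff ℝ (⊤ : ℕ∞) f) (p : ℝ × ℝ × ℝ) :
    P1 (CD2 A f) p
      = P1 (P2 f) p + (Complex.I * (Complex.ofReal (P1 A p)) * f p
        + Complex.I * (A p : ℂ) * P1 f p) := by
  have h1 := hd1 ((contDiff_P2 hf).differentiable (by simp) p)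
  have h2 := (hd1 (hA.differentiable (by simp) p)).ofReal_comp
  have h3 := hd1 (hf.differentiable (by simp) p)
  exact (h1.add ((h2.const_mul Complex.I).mul h3)).deriv

lemma P2_CD1 (hA : ContDiff ℝ (⊤ : ℕ∞) A) (hf : ContDiff ℝ (⊤ : ℕ∞) f) (p : ℝ × ℝ × ℝ) :
    P2 (CD1 A f) p
      = P2 (P1 f) p + (Complex.I * (Complex.ofReal (P2 A p)) * f p
        + Complex.I * (A p : ℂ) * P2 f p) := by
  have h1 := hd2 ((contDiff_P1 hf).differentiable (by simp) p)
  have h2 := (hd2 (hA.differentiable (by simp) p)).ofReal_comp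
  have h3 := hd2 (hf.differentiable (by simp) p)
  exact (h1.add ((h2.const_mul Complex.I).mul h3)).deriv

lemma comm01 {A0 A1 : ℝ × ℝ × ℝ → ℝ} (hA0 : ContDiff ℝ (⊤ : ℕ∞) A0) (hA1 : ContDiff ℝ (⊤ : ℕ∞) A1)
    (hf : ContDiff ℝ (⊤ : ℕ∞) f) (p : ℝ × ℝ × ℝ) :
    CD0 A0 (CD1 A1 f) p = CD1 A1 (CD0 A0 f) p + Complex.I * (F01 A0 A1 p : ℂ) * f p := by
  have e0 := P0_CD1 hA1 hf p
  have e1 := P1_CD0 hA0 hf p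
  have hc := P01_comm hf p
  simp only [CD0, CD1, F01]
  rw [e0, e1, hc]
  push_cast
  ring

lemma comm02 {A0 A2 : ℝ × ℝ × ℝ → ℝ} (hA0 : ContDiff ℝ (⊤ : ℕ∞) A0) (hA2 : ContDiff ℝ (⊤ : ℕ∞) A2)
    (hf : ContDiff ℝ (⊤ : ℕ∞) f) (p : ℝ × ℝ × ℝ) :
    CD0 A0 (CD2 A2 f) p = CD2 A2 (CD0 A0 f) p + Complex.I * (F02 A0 A2 p : ℂ) * f p := by
  have e0 := P0_CD2 hA2 hf p
  have e2 := P2_CD0 hA0 hf p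
  have hc := P02_comm hf p
  simp only [CD0, CD2, F02]
  rw [e0, e2, hc]
  push_cast
  ring

lemma comm12 {A1 A2 : ℝ × ℝ × ℝ → ℝ} (hA1 : ContDiff ℝ (⊤ : ℕ∞) A1) (hA2 : ContDiff ℝ (⊤ : ℕ∞) A2)
    (hf : ContDiff ℝ (⊤ : ℕ∞) f) (p : ℝ × ℝ × ℝ) :
    CD1 A1 (CD2 A2 f) p = CD2 A2 (CD1 A1 f) p + Complex.I * (F12 A1 A2 p : ℂ) * f p := by
  have e1 := P1_CD2 hA2 hf p
  have e2 := P2_CD1 hA1 hf p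
  have hc := P12_comm hf p
  simp only [CD1, CD2, F12]
  rw [e1, e2, hc]
  push_cast
  ring

lemma CD0_sub (hf : ContDiff ℝ (⊤ : ℕ∞) f) (hg : ContDiff ℝ (⊤ : ℕ∞) g) (p : ℝ × ℝ × ℝ) :
    CD0 A (fun q => f q - g q) p = CD0 A f p - CD0 A g p := by
  have h : P0 (fun q => f q - g q) p = P0 f p - P0 g p :=
    ((hd0 (hf.differentiable (by simp) p)).sub (hd0 (hg.differentiable (by simp) p))).deriv
  simp only [CD0, h]; ring

lemma CD1_Iadd (hf : ContDiff ℝ (⊤ : ℕ∞) f) (hg : ContDiff ℝ (⊤ : ℕ∞) g) (p : ℝ × ℝ × ℝ) :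
    CD1 A (fun q => Complex.I * f q + Complex.I * g q) p
      = Complex.I * CD1 A f p + Complex.I * CD1 A g p := by
  have h : P1 (fun q => Complex.I * f q + Complex.I * g q) p
      = Complex.I * P1 f p + Complex.I * P1 g p :=
    (((hd1 (hf.differentiable (by simp) p)).const_mul Complex.I).add
      ((hd1 (hg.differentiable (by simp) p)).const_mul Complex.I)).deriv
  simp only [CD1, h]; ring

lemma CD2_Isub (hf : ContDiff ℝ (⊤ : ℕ∞) f) (hg : ContDiff ℝ (⊤ : ℕ∞) g) (p : ℝ × ℝ × ℝ) :
    CD2 A (fun q => Complex.I * f q - Complex.I * g q) p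
      = Complex.I * CD2 A f p - Complex.I * CD2 A g p := by
  have h : P2 (fun q => Complex.I * f q - Complex.I * g q) p
      = Complex.I * P2 f p - Complex.I * P2 g p :=
    (((hd2 (hf.differentiable (by simp) p)).const_mul Complex.I).sub
      ((hd2 (hg.differentiable (by simp) p)).const_mul Complex.I)).deriv
  simp only [CD2, h]; ring

lemma key (a b s θ : ℂ) (μ : ℝ) :
    -(((μ * ((starRingEnd ℂ) b * a).im : ℝ) : ℂ)) * s
      + Complex.I * ((μ * (((starRingEnd ℂ) a * s).re + ((starRingEnd ℂ) b * θ).re) : ℝ) : ℂ) * b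
      - Complex.I * ((μ * (((starRingEnd ℂ) b * s).re - ((starRingEnd ℂ) a * θ).re) : ℝ) : ℂ) * a
    = (μ : ℂ) * Complex.I *
        (b * ((((starRingEnd ℂ) b * θ).re : ℝ) : ℂ) + a * ((((starRingEnd ℂ) a * θ).re : ℝ) : ℂ)) := by
  apply Complex.ext <;>
    simp only [Complex.add_re, Complex.add_im, Complex.sub_re, Complex.sub_im, Complex.mul_re,
      Complex.mul_im, Complex.neg_re, Complex.neg_im, Complex.I_re, Complex.I_im,
      Complex.ofReal_re, Complex.ofReal_im, Complex.conj_re, Complex.conj_im] <;>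
    ring

end Stmt13Aux

open Stmt13Aux

theorem stmt13 (ψ1 ψ2 Θ : ℝ × ℝ × ℝ → ℂ) (A0 A1 A2 : ℝ × ℝ × ℝ → ℝ) (μ : ℝ)
    (hμ : μ = 1 ∨ μ = -1)
    (hψ1 : ContDiff ℝ (⊤ : ℕ∞) ψ1) (hψ2 : ContDiff ℝ (⊤ : ℕ∞) ψ2)
    (hA0 : ContDiff ℝ (⊤ : ℕ∞) A0) (hA1 : ContDiff ℝ (⊤ : ℕ∞) A1) (hA2 : ContDiff ℝ (⊤ : ℕ∞) A2)
    (hΘ : Θ = fun p => CD1 A1 ψ2 p - CD2 A2 ψ1 p)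
    -- curvature relations
    (hF12 : ∀ p, F12 A1 A2 p = μ * ((starRingEnd ℂ) (ψ2 p) * ψ1 p).im)
    (hF01 : ∀ p, μ * F01 A0 A1 p
      = ((starRingEnd ℂ) (ψ1 p) * (CD1 A1 ψ1 p + CD2 A2 ψ2 p)).re
        + ((starRingEnd ℂ) (ψ2 p) * Θ p).re)
    (hF02 : ∀ p, μ * F02 A0 A2 p
      = ((starRingEnd ℂ) (ψ2 p) * (CD1 A1 ψ1 p + CD2 A2 ψ2 p)).re
        - ((starRingEnd ℂ) (ψ1 p) * Θ p).re)
    -- evolution equations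
    (hev1 : ∀ p, CD0 A0 ψ1 p
      = Complex.I * CD1 A1 (fun q => CD1 A1 ψ1 q + CD2 A2 ψ2 q) p
        - Complex.I * CD2 A2 Θ p)
    (hev2 : ∀ p, CD0 A0 ψ2 p
      = Complex.I * CD2 A2 (fun q => CD1 A1 ψ1 q + CD2 A2 ψ2 q) p
        + Complex.I * CD1 A1 Θ p) :
    ∀ p : ℝ × ℝ × ℝ,
      CD0 A0 Θ p
        = Complex.I * (CD1 A1 (CD1 A1 Θ) p + CD2 A2 (CD2 A2 Θ) p)
          + (μ : ℂ) * Complex.I *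
            ( ψ2 p * ((((starRingEnd ℂ) (ψ2 p) * Θ p).re : ℝ) : ℂ)
              + ψ1 p * ((((starRingEnd ℂ) (ψ1 p) * Θ p).re : ℝ) : ℂ) ) := by
  intro p
  have hμ2 : μ * μ = 1 := by rcases hμ with h | h <;> rw [h] <;> norm_num
  have hΘsm : ContDiff ℝ (⊤ : ℕ∞) Θ := by
    rw [hΘ]
    exact (contDiff_CD1 hA1 hψ2).sub (contDiff_CD2 hA2 hψ1)
  set S : ℝ × ℝ × ℝ → ℂ := fun q => CD1 A1 ψ1 q + CD2 A2 ψ2 q with hSdef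
  have hSsm : ContDiff ℝ (⊤ : ℕ∞) S := (contDiff_CD1 hA1 hψ1).add (contDiff_CD2 hA2 hψ2)
  have hC1Θ := contDiff_CD1 hA1 hΘsm
  have hC2Θ := contDiff_CD2 hA2 hΘsm
  have hC1S := contDiff_CD1 hA1 hSsm
  have hC2S := contDiff_CD2 hA2 hSsm
  have s1 : CD0 A0 Θ p = CD0 A0 (CD1 A1 ψ2) p - CD0 A0 (CD2 A2 ψ1) p := by
    rw [hΘ]
    exact CD0_sub (contDiff_CD1 hA1 hψ2) (contDiff_CD2 hA2 hψ1) p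
  have c1 := comm01 hA0 hA1 hψ2 p
  have c2 := comm02 hA0 hA2 hψ1 p
  have hev2f : CD0 A0 ψ2 = fun q => Complex.I * CD2 A2 S q + Complex.I * CD1 A1 Θ q :=
    funext fun q => hev2 q
  have hev1f : CD0 A0 ψ1 = fun q => Complex.I * CD1 A1 S q - Complex.I * CD2 A2 Θ q :=
    funext fun q => hev1 q
  have s3a : CD1 A1 (CD0 A0 ψ2) p
      = Complex.I * CD1 A1 (CD2 A2 S) p + Complex.I * CD1 A1 (CD1 A1 Θ) p := by
    rw [hev2f]
    exact CD1_Iadd hC2S hC1Θ p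
  have s3b : CD2 A2 (CD0 A0 ψ1) p
      = Complex.I * CD2 A2 (CD1 A1 S) p - Complex.I * CD2 A2 (CD2 A2 Θ) p := by
    rw [hev1f]
    exact CD2_Isub hC1S hC2Θ p
  have c3 := comm12 hA1 hA2 hSsm p
  have hmain : CD0 A0 Θ p
      = Complex.I * (CD1 A1 (CD1 A1 Θ) p + CD2 A2 (CD2 A2 Θ) p)
        + (-(Complex.ofReal (F12 A1 A2 p)) * S p
           + Complex.I * Complex.ofReal (F01 A0 A1 p) * ψ2 p
           - Complex.I * Complex.ofReal (F02 A0 A2 p) * ψ1 p) := by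
    rw [s1, c1, c2, s3a, s3b, c3]
    linear_combination (Complex.ofReal (F12 A1 A2 p) * S p) * Complex.I_mul_I
  have h01 : F01 A0 A1 p
      = μ * (((starRingEnd ℂ) (ψ1 p) * (CD1 A1 ψ1 p + CD2 A2 ψ2 p)).re
        + ((starRingEnd ℂ) (ψ2 p) * Θ p).re) := by
    rw [← one_mul (F01 A0 A1 p), ← hμ2, mul_assoc, hF01 p]
  have h02 : F02 A0 A2 p
      = μ * (((starRingEnd ℂ) (ψ2 p) * (CD1 A1 ψ1 p + CD2 A2 ψ2 p)).re
        - ((starRingEnd ℂ) (ψ1 p) * Θ p).re) := by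
    rw [← one_mul (F02 A0 A2 p), ← hμ2, mul_assoc, hF02 p]
  have hSp : S p = CD1 A1 ψ1 p + CD2 A2 ψ2 p := rfl
  rw [hmain, hF12 p, h01, h02, hSp]
  linear_combination key (ψ1 p) (ψ2 p) (CD1 A1 ψ1 p + CD2 A2 ψ2 p) (Θ p) μ
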